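/- Let S be a commutative semiring with no zero divisors, equipped with a preorder ⪰ such that x ⪰ y implies x + a ⪰ y + a and x·a ⪰ y·a for all a ∈ S, and let ∼ be the equivalence relation generated by ⪰. Fix u ∈ S with u ≠ 0 and u ∼ 1. Let T be a set of functions Δ : S → ℝ such that every Δ ∈ T satisfies Δ(x·y) = Δ(x) + Δ(y) for all nonzero x, y ∈ S and Δ(u) = 1. Assume the large-sample comparison property: for all nonzero x, y ∈ S with x ∼ y, if Δ(x) > Δ(y) for every Δ ∈ T, then there exist k ∈ ℕ and n ∈ ℕ with n ≥ 1 such that u^k·x^n ⪰ u^k·y^n. Let D : S → ℝ be monotone (x ⪰ y implies D(x) ≥ D(y)) and extensive (D(x·y) = D(x) + D(y) for all nonzero x, y). Then for all nonzero x, y ∈ S with x ∼ y: if Δ(x) ≥ Δ(y) for every Δ ∈ T, then D(x) ≥ D(y). -/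
import Mathlib


/-- In a preordered semidomain with a normalized power-universal-like
element `u` and a test set `T` of extensive normalized functionals satisfying the
large-sample comparison property, every monotone extensive divergence `D` is monotone
under the pointwise order induced by `T` on equivalent nonzero elements. -/
theorem key_lemma_divergence_monotone
    {S : Type*} [CommSemiring S] [NoZeroDivisors S]
    (r : S → S → Prop)
    (hrefl : ∀ x, r x x)
    (htrans : ∀ x y z, r x y → r y z → r x z)
    (hadd : ∀ x y a, r x y → r (x + a) (y + a))
    (hmul : ∀ x y a, r x y → r (x * a) (y * a))
    (u : S) (hu0 : u ≠ 0) (hu1 : Relation.EqvGen r u 1)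
    (T : Set (S → ℝ))
    (hText : ∀ Δ ∈ T, ∀ x y : S, x ≠ 0 → y ≠ 0 → Δ (x * y) = Δ x + Δ y)
    (hTu : ∀ Δ ∈ T, Δ u = 1)
    (hLS : ∀ x y : S, x ≠ 0 → y ≠ 0 → Relation.EqvGen r x y →
      (∀ Δ ∈ T, Δ y < Δ x) →
      ∃ k n : ℕ, 1 ≤ n ∧ r (u ^ k * x ^ n) (u ^ k * y ^ n))
    (D : S → ℝ)
    (hDmono : ∀ x y, r x y → D y ≤ D x)
    (hDext : ∀ x y : S, x ≠ 0 → y ≠ 0 → D (x * y) = D x + D y) :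
    ∀ x y : S, x ≠ 0 → y ≠ 0 → Relation.EqvGen r x y →
      (∀ Δ ∈ T, Δ y ≤ Δ x) → D y ≤ D x := by
  -- EqvGen is compatible with multiplication
  have hmulEq : ∀ x y a : S, Relation.EqvGen r x y →
      Relation.EqvGen r (x * a) (y * a) := by
    intro x y a h
    induction h with
    | rel p q hpq => exact Relation.EqvGen.rel _ _ (hmul p q a hpq)
    | refl p => exact Relation.EqvGen.refl _
    | symm p q _ ih => exact Relation.EqvGen.symm _ _ ih
    | trans p q s _ _ ih1 ih2 => exact Relation.EqvGen.trans _ _ _ ih1 ih2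
  have hpowEq : ∀ x y : S, Relation.EqvGen r x y → ∀ m : ℕ,
      Relation.EqvGen r (x ^ m) (y ^ m) := by
    intro x y h m
    induction m with
    | zero => simpa using Relation.EqvGen.refl (1 : S)
    | succ n ih =>
        have a1 : Relation.EqvGen r (x ^ n * x) (y ^ n * x) := hmulEq _ _ _ ih
        have a2 : Relation.EqvGen r (x * y ^ n) (y * y ^ n) := hmulEq _ _ _ h
        rw [mul_comm x (y ^ n), mul_comm y (y ^ n)] at a2
        rw [pow_succ, pow_succ]
        exact Relation.EqvGen.trans _ _ _ a1 a2
  -- extensivity on powers and on `u ^ k * z`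
  have hfpow : ∀ (f : S → ℝ), (∀ a b : S, a ≠ 0 → b ≠ 0 → f (a * b) = f a + f b) →
      ∀ z : S, z ≠ 0 → ∀ n : ℕ, f (z ^ (n + 1)) = (n + 1 : ℝ) * f z := by
    intro f hf z hz n
    induction n with
    | zero => simp
    | succ m ih =>
        have hz' : z ^ (m + 1) ≠ 0 := pow_ne_zero _ hz
        rw [pow_succ, hf _ _ hz' hz, ih]
        push_cast
        ring
  have hfuk : ∀ (f : S → ℝ), (∀ a b : S, a ≠ 0 → b ≠ 0 → f (a * b) = f a + f b) →
      ∀ z : S, z ≠ 0 → ∀ k : ℕ, f (u ^ k * z) = (k : ℝ) * f u + f z := by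
    intro f hf z hz k
    induction k with
    | zero => simp
    | succ m ih =>
        have h1 : u ^ (m + 1) * z = u * (u ^ m * z) := by ring
        have h2 : u ^ m * z ≠ 0 := mul_ne_zero (pow_ne_zero _ hu0) hz
        rw [h1, hf _ _ hu0 h2, ih]
        push_cast
        ring
  intro x y hx hy hxy hT
  -- key inequality for each m
  have key : ∀ m : ℕ, ((m : ℝ) + 1) * D y ≤ D u + ((m : ℝ) + 1) * D x := by
    intro m
    have hxm : x ^ (m + 1) ≠ 0 := pow_ne_zero _ hx
    have hym : y ^ (m + 1) ≠ 0 := pow_ne_zero _ hy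
    have ha0 : u * x ^ (m + 1) ≠ 0 := mul_ne_zero hu0 hxm
    have hab : Relation.EqvGen r (u * x ^ (m + 1)) (y ^ (m + 1)) := by
      have h1 : Relation.EqvGen r (u * x ^ (m + 1)) (1 * x ^ (m + 1)) :=
        hmulEq _ _ _ hu1
      rw [one_mul] at h1
      exact Relation.EqvGen.trans _ _ _ h1 (hpowEq x y hxy (m + 1))
    have hstrict : ∀ Δ ∈ T, Δ (y ^ (m + 1)) < Δ (u * x ^ (m + 1)) := by
      intro Δ hΔ
      have hΔext := hText Δ hΔ
      rw [hΔext _ _ hu0 hxm, hfpow Δ hΔext x hx m, hfpow Δ hΔext y hy m,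
        hTu Δ hΔ]
      have := hT Δ hΔ
      nlinarith [this, (Nat.cast_nonneg m : (0:ℝ) ≤ m)]
    obtain ⟨k, n, hn, hr⟩ := hLS _ _ ha0 hym hab hstrict
    have hmono := hDmono _ _ hr
    obtain ⟨n', rfl⟩ : ∃ n', n = n' + 1 := ⟨n - 1, by omega⟩
    have han : (u * x ^ (m + 1)) ^ (n' + 1) ≠ 0 := pow_ne_zero _ ha0
    have hbn : (y ^ (m + 1)) ^ (n' + 1) ≠ 0 := pow_ne_zero _ hym
    rw [hfuk D hDext _ hbn k, hfuk D hDext _ han k,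
      hfpow D hDext _ ha0 n', hfpow D hDext _ hym n',
      hDext _ _ hu0 hxm, hfpow D hDext x hx m, hfpow D hDext y hy m] at hmono
    have hn'pos : (0 : ℝ) < (n' : ℝ) + 1 := by positivity
    nlinarith [hmono, hn'pos]
  by_contra hcon
  push_neg at hcon
  have hε : 0 < D y - D x := by linarith
  obtain ⟨m, hm⟩ := exists_nat_gt (D u / (D y - D x))
  have hkey := key m
  have h1 : ((m : ℝ) + 1) * (D y - D x) ≤ D u := by linarith
  have h2 : (m : ℝ) + 1 ≤ D u / (D y - D x) := (le_div_iff₀ hε).2 h1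
  linarith
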